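/- arXiv:1004.1297 — 5 statements merged into one kernel-verified Lean document; each statement's English description precedes it below -/
import Mathlib

section
/- Let (a_j)_{j∈ℤ} be a finitely supported complex sequence, p ∈ ℝ, z ∈ ℂ∖{0}, and τ ≥ 1 an integer. Suppose that for all i ∈ ℤ and all r = 0,…,τ−1: z^p (i + p/2)^r = ∑_j a_{2j} (i − j + p)^r z^{2j}. Then for all r = 0,…,τ−1: ∑_j a_{2j} (2j)^r z^{2j} = p^r z^p. -/
open Finset

theorem stmt4 (M : ℕ) (a : ℤ → ℂ)
    (hsupp : ∀ j : ℤ, a j ≠ 0 → j ∈ Finset.Icc (-(M : ℤ)) M)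
    (p : ℝ) (z : ℂ) (hz : z ≠ 0) (τ : ℕ) (hτ : 1 ≤ τ)
    (c : ℂ) (hc : c ≠ 0)
    (hyp : ∀ i : ℤ, ∀ r < τ,
      c * ((i : ℂ) + (p : ℂ) / 2) ^ r
        = ∑ j ∈ Finset.Icc (-(M : ℤ)) M,
            a (2 * j) * ((i : ℂ) - (j : ℂ) + (p : ℂ)) ^ r * z ^ (2 * j)) :
    ∀ r < τ,
      ∑ j ∈ Finset.Icc (-(M : ℤ)) M,
          a (2 * j) * ((2 * j : ℤ) : ℂ) ^ r * z ^ (2 * j)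
        = (p : ℂ) ^ r * c := by
  set S := Finset.Icc (-(M : ℤ)) M with hS
  have key : ∀ r, r < τ →
      (∑ j ∈ S, a (2 * j) * (((2 * j : ℤ) : ℂ) - (p : ℂ)) ^ r * z ^ (2 * j))
        = if r = 0 then c else 0 := by
    intro r
    induction r using Nat.strong_induction_on with
    | _ r ih =>
      intro hr
      have h0 := hyp 0 r hr
      rcases Nat.eq_zero_or_pos r with hr0 | hr0
      · subst hr0
        simp only [pow_zero, mul_one, if_pos rfl] at h0 ⊢
        simpa using h0.symm
      · have hexp : ∀ j ∈ S,
            a (2 * j) * (((0 : ℤ) : ℂ) - (j : ℂ) + (p : ℂ)) ^ r * z ^ (2 * j)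
              = ∑ k ∈ Finset.range (r + 1),
                  (((-1 / 2 : ℂ)) ^ k * ((p : ℂ) / 2) ^ (r - k) * (r.choose k : ℂ))
                    * (a (2 * j) * (((2 * j : ℤ) : ℂ) - (p : ℂ)) ^ k * z ^ (2 * j)) := by
          intro j _
          have hsplit : (((0 : ℤ) : ℂ) - (j : ℂ) + (p : ℂ))
              = ((-1 / 2 : ℂ)) * (((2 * j : ℤ) : ℂ) - (p : ℂ)) + (p : ℂ) / 2 := by
            push_cast; ring
          rw [hsplit, add_pow, Finset.mul_sum, Finset.sum_mul]
          refine Finset.sum_congr rfl fun k _ => ?_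
          rw [mul_pow]; ring
        rw [Finset.sum_congr rfl hexp, Finset.sum_comm] at h0
        have h1 : ∀ k ∈ Finset.range (r + 1),
            (∑ j ∈ S, (((-1 / 2 : ℂ)) ^ k * ((p : ℂ) / 2) ^ (r - k) * (r.choose k : ℂ))
                * (a (2 * j) * (((2 * j : ℤ) : ℂ) - (p : ℂ)) ^ k * z ^ (2 * j)))
              = (((-1 / 2 : ℂ)) ^ k * ((p : ℂ) / 2) ^ (r - k) * (r.choose k : ℂ))
                * ∑ j ∈ S, a (2 * j) * (((2 * j : ℤ) : ℂ) - (p : ℂ)) ^ k * z ^ (2 * j) := by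
          intro k _
          rw [Finset.mul_sum]
        rw [Finset.sum_congr rfl h1, Finset.sum_range_succ] at h0
        have h2 : ∀ k ∈ Finset.range r,
            (((-1 / 2 : ℂ)) ^ k * ((p : ℂ) / 2) ^ (r - k) * (r.choose k : ℂ))
                * (∑ j ∈ S, a (2 * j) * (((2 * j : ℤ) : ℂ) - (p : ℂ)) ^ k * z ^ (2 * j))
              = if k = 0 then ((p : ℂ) / 2) ^ r * c else 0 := by
          intro k hk
          have hkr := Finset.mem_range.mp hk
          rw [ih k hkr (lt_trans hkr hr)]
          rcases eq_or_ne k 0 with hk0 | hk0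
          · subst hk0; simp
          · simp [hk0]
        rw [Finset.sum_congr rfl h2, Finset.sum_ite_eq' (Finset.range r) 0
          (fun _ => ((p : ℂ) / 2) ^ r * c)] at h0
        have h0' : c * ((p : ℂ) / 2) ^ r
            = ((p : ℂ) / 2) ^ r * c + (-1 / 2 : ℂ) ^ r
                * ∑ j ∈ S, a (2 * j) * (((2 * j : ℤ) : ℂ) - (p : ℂ)) ^ r * z ^ (2 * j) := by
          have hmem : (0 : ℕ) ∈ Finset.range r := Finset.mem_range.mpr hr0
          simp only [hmem, if_pos, Int.cast_zero, zero_add] at h0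
          rw [h0]
          simp [Nat.choose_self]
        have hTr : (-1 / 2 : ℂ) ^ r
            * (∑ j ∈ S, a (2 * j) * (((2 * j : ℤ) : ℂ) - (p : ℂ)) ^ r * z ^ (2 * j)) = 0 := by
          linear_combination -h0'
        have hne : ((-1 / 2 : ℂ)) ^ r ≠ 0 := pow_ne_zero _ (by norm_num)
        have hzero : (∑ j ∈ S, a (2 * j) * (((2 * j : ℤ) : ℂ) - (p : ℂ)) ^ r * z ^ (2 * j)) = 0 := by
          rcases mul_eq_zero.mp hTr with h | h
          · exact absurd h hne
          · exact h
        rw [hzero, if_neg (Nat.pos_iff_ne_zero.mp hr0)]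
  intro r hr
  have hexp : ∀ j ∈ S,
      a (2 * j) * ((2 * j : ℤ) : ℂ) ^ r * z ^ (2 * j)
        = ∑ k ∈ Finset.range (r + 1),
            ((p : ℂ) ^ (r - k) * (r.choose k : ℂ))
              * (a (2 * j) * (((2 * j : ℤ) : ℂ) - (p : ℂ)) ^ k * z ^ (2 * j)) := by
    intro j _
    have hsplit : ((2 * j : ℤ) : ℂ) = (((2 * j : ℤ) : ℂ) - (p : ℂ)) + (p : ℂ) := by ring
    rw [hsplit, add_pow, Finset.mul_sum, Finset.sum_mul]
    refine Finset.sum_congr rfl fun k _ => ?_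
    ring
  rw [Finset.sum_congr rfl hexp, Finset.sum_comm]
  have h1 : ∀ k ∈ Finset.range (r + 1),
      (∑ j ∈ S, ((p : ℂ) ^ (r - k) * (r.choose k : ℂ))
          * (a (2 * j) * (((2 * j : ℤ) : ℂ) - (p : ℂ)) ^ k * z ^ (2 * j)))
        = if k = 0 then (p : ℂ) ^ r * c else 0 := by
    intro k hk
    have hkr : k < r + 1 := Finset.mem_range.mp hk
    rw [← Finset.mul_sum, key k (lt_of_lt_of_le hkr (Nat.succ_le_of_lt hr))]
    rcases eq_or_ne k 0 with hk0 | hk0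
    · subst hk0; simp
    · simp [hk0]
  rw [Finset.sum_congr rfl h1, Finset.sum_ite_eq' (Finset.range (r + 1)) 0
    (fun _ => (p : ℂ) ^ r * c)]
  simp
end

section
/- Let (a_j)_{j∈ℤ} be a finitely supported complex sequence, p ∈ ℝ, z ∈ ℂ∖{0}, and τ ≥ 1 an integer. Suppose that for all i ∈ ℤ and all r = 0,…,τ−1: z^p (i + 1/2 + p/2)^r = ∑_j a_{2j+1} (i − j + p)^r z^{2j+1}. Then for all r = 0,…,τ−1: ∑_j a_{2j+1} (2j)^r z^{2j+1} = (p−1)^r z^p and ∑_j a_{2j+1} (2j+1)^r z^{2j+1} = p^r z^p. -/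
open Finset

theorem stmt5 (M : ℕ) (a : ℤ → ℂ)
    (hsupp : ∀ j : ℤ, a j ≠ 0 → j ∈ Finset.Icc (-(M : ℤ)) M)
    (p : ℝ) (z : ℂ) (hz : z ≠ 0) (τ : ℕ) (hτ : 1 ≤ τ)
    (c : ℂ) (hc : c ≠ 0)
    (hyp : ∀ i : ℤ, ∀ r < τ,
      c * ((i : ℂ) + 1 / 2 + (p : ℂ) / 2) ^ r
        = ∑ j ∈ Finset.Icc (-(M : ℤ)) M,
            a (2 * j + 1) * ((i : ℂ) - (j : ℂ) + (p : ℂ)) ^ r * z ^ (2 * j + 1)) :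
    ∀ r < τ,
      (∑ j ∈ Finset.Icc (-(M : ℤ)) M,
          a (2 * j + 1) * ((2 * j : ℤ) : ℂ) ^ r * z ^ (2 * j + 1)
        = ((p : ℂ) - 1) ^ r * c) ∧
      (∑ j ∈ Finset.Icc (-(M : ℤ)) M,
          a (2 * j + 1) * ((2 * j + 1 : ℤ) : ℂ) ^ r * z ^ (2 * j + 1)
        = (p : ℂ) ^ r * c) := by
  have key : ∀ r < τ, ∀ A : ℂ,
      ∑ j ∈ Finset.Icc (-(M : ℤ)) M,
        a (2 * j + 1) * (A + (-2) * ((0 : ℂ) - (j : ℂ) + (p : ℂ))) ^ r * z ^ (2 * j + 1)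
        = (A + (-2) * ((0 : ℂ) + 1 / 2 + (p : ℂ) / 2)) ^ r * c := by
    intro r hr A
    simp_rw [add_pow, mul_pow, Finset.mul_sum, Finset.sum_mul]
    rw [Finset.sum_comm]
    refine Finset.sum_congr rfl fun k hk => ?_
    have hk' : r - k < τ := lt_of_le_of_lt (Nat.sub_le r k) hr
    have h0 := hyp 0 (r - k) hk'
    push_cast at h0
    have step : ∑ j ∈ Finset.Icc (-(M : ℤ)) M,
        a (2 * j + 1) * (A ^ k * ((-2 : ℂ) ^ (r - k) * ((0 : ℂ) - (j : ℂ) + (p : ℂ)) ^ (r - k)) * (r.choose k : ℂ)) * z ^ (2 * j + 1)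
        = A ^ k * ((-2 : ℂ) ^ (r - k)) * (r.choose k : ℂ) *
            ∑ j ∈ Finset.Icc (-(M : ℤ)) M,
              a (2 * j + 1) * ((0 : ℂ) - (j : ℂ) + (p : ℂ)) ^ (r - k) * z ^ (2 * j + 1) := by
      rw [Finset.mul_sum]; exact Finset.sum_congr rfl fun j _ => by ring
    rw [step, ← h0]
    ring
  intro r hr
  constructor
  · have h := key r hr (2 * (p : ℂ))
    calc ∑ j ∈ Finset.Icc (-(M : ℤ)) M,
          a (2 * j + 1) * ((2 * j : ℤ) : ℂ) ^ r * z ^ (2 * j + 1)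
        = ∑ j ∈ Finset.Icc (-(M : ℤ)) M,
            a (2 * j + 1) * (2 * (p : ℂ) + (-2) * ((0 : ℂ) - (j : ℂ) + (p : ℂ))) ^ r * z ^ (2 * j + 1) := by
          refine Finset.sum_congr rfl fun j _ => ?_
          congr 2
          push_cast
          ring
      _ = (2 * (p : ℂ) + (-2) * ((0 : ℂ) + 1 / 2 + (p : ℂ) / 2)) ^ r * c := h
      _ = ((p : ℂ) - 1) ^ r * c := by ring_nf
  · have h := key r hr (2 * (p : ℂ) + 1)
    calc ∑ j ∈ Finset.Icc (-(M : ℤ)) M,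
          a (2 * j + 1) * ((2 * j + 1 : ℤ) : ℂ) ^ r * z ^ (2 * j + 1)
        = ∑ j ∈ Finset.Icc (-(M : ℤ)) M,
            a (2 * j + 1) * (2 * (p : ℂ) + 1 + (-2) * ((0 : ℂ) - (j : ℂ) + (p : ℂ))) ^ r * z ^ (2 * j + 1) := by
          refine Finset.sum_congr rfl fun j _ => ?_
          congr 2
          push_cast
          ring
      _ = (2 * (p : ℂ) + 1 + (-2) * ((0 : ℂ) + 1 / 2 + (p : ℂ) / 2)) ^ r * c := h
      _ = (p : ℂ) ^ r * c := by ring_nf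
end

section
/- Let (a_j)_{j∈ℤ} be a finitely supported complex sequence, p ∈ ℝ, z ∈ ℂ∖{0}, and τ ≥ 1. If for all i ∈ ℤ and r = 0,…,τ−1 both z^p (i + p/2)^r = ∑_j a_{2j}(i−j+p)^r z^{2j} and z^p (i + 1/2 + p/2)^r = ∑_j a_{2j+1}(i−j+p)^r z^{2j+1} hold, then ∑_j a_{2j}(2j+1)^r z^{2j} = (p+1)^r z^p for all r = 0,…,τ−1. -/
open Finset

theorem stmt6 (M : ℕ) (a : ℤ → ℂ)
    (hsupp : ∀ j : ℤ, a j ≠ 0 → j ∈ Finset.Icc (-(M : ℤ)) M)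
    (p : ℝ) (z : ℂ) (hz : z ≠ 0) (τ : ℕ) (hτ : 1 ≤ τ)
    (c : ℂ) (hc : c ≠ 0)
    (hypeven : ∀ i : ℤ, ∀ r < τ,
      c * ((i : ℂ) + (p : ℂ) / 2) ^ r
        = ∑ j ∈ Finset.Icc (-(M : ℤ)) M,
            a (2 * j) * ((i : ℂ) - (j : ℂ) + (p : ℂ)) ^ r * z ^ (2 * j))
    (hypodd : ∀ i : ℤ, ∀ r < τ,
      c * ((i : ℂ) + 1 / 2 + (p : ℂ) / 2) ^ r
        = ∑ j ∈ Finset.Icc (-(M : ℤ)) M,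
            a (2 * j + 1) * ((i : ℂ) - (j : ℂ) + (p : ℂ)) ^ r * z ^ (2 * j + 1)) :
    ∀ r < τ,
      ∑ j ∈ Finset.Icc (-(M : ℤ)) M,
          a (2 * j) * ((2 * j + 1 : ℤ) : ℂ) ^ r * z ^ (2 * j)
        = ((p : ℂ) + 1) ^ r * c := by
  intro r hr
  -- The i = 0 instance of hypeven at each exponent s < τ
  have key : ∀ s, s < τ →
      ∑ j ∈ Finset.Icc (-(M : ℤ)) M,
        a (2 * j) * ((p : ℂ) - (j : ℂ)) ^ s * z ^ (2 * j)
        = c * ((p : ℂ) / 2) ^ s := by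
    intro s hs
    have h := hypeven 0 s hs
    simp only [Int.cast_zero, zero_add, zero_sub] at h
    rw [h]
    apply Finset.sum_congr rfl
    intro j _
    ring_nf
  calc
    ∑ j ∈ Finset.Icc (-(M : ℤ)) M,
        a (2 * j) * ((2 * j + 1 : ℤ) : ℂ) ^ r * z ^ (2 * j)
      = ∑ j ∈ Finset.Icc (-(M : ℤ)) M, ∑ k ∈ Finset.range (r + 1),
          (2 * (p : ℂ) + 1) ^ k * ((-2 : ℂ)) ^ (r - k) * (r.choose k : ℂ) *
            (a (2 * j) * ((p : ℂ) - (j : ℂ)) ^ (r - k) * z ^ (2 * j)) := by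
        apply Finset.sum_congr rfl
        intro j _
        have hb : ((2 * j + 1 : ℤ) : ℂ)
            = (2 * (p : ℂ) + 1) + (-2) * ((p : ℂ) - (j : ℂ)) := by
          push_cast; ring
        rw [hb, add_pow, Finset.mul_sum, Finset.sum_mul]
        apply Finset.sum_congr rfl
        intro k _
        simp only [mul_pow]
        ring
    _ = ∑ k ∈ Finset.range (r + 1),
          (2 * (p : ℂ) + 1) ^ k * ((-2 : ℂ)) ^ (r - k) * (r.choose k : ℂ) *
            (c * ((p : ℂ) / 2) ^ (r - k)) := by
        rw [Finset.sum_comm]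
        apply Finset.sum_congr rfl
        intro k hk
        rw [← Finset.mul_sum, key (r - k) (lt_of_le_of_lt (Nat.sub_le r k) hr)]
    _ = c * ∑ k ∈ Finset.range (r + 1),
          (2 * (p : ℂ) + 1) ^ k * (-(p : ℂ)) ^ (r - k) * (r.choose k : ℂ) := by
        rw [Finset.mul_sum]
        apply Finset.sum_congr rfl
        intro k _
        rw [show (-(p : ℂ)) ^ (r - k) = (-2 : ℂ) ^ (r - k) * ((p : ℂ) / 2) ^ (r - k) by
          rw [← mul_pow]; congr 1; ring]
        ring
    _ = ((p : ℂ) + 1) ^ r * c := by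
        rw [← add_pow, show (2 * (p : ℂ) + 1) + (-(p : ℂ)) = (p : ℂ) + 1 by ring, mul_comm]
end

section
/- Let a(z) = ∑_j a_j z^j be a Laurent polynomial with finitely many nonzero complex coefficients, z₀ ∈ ℂ∖{0}, p ∈ ℝ, and τ ≥ 1. Suppose for all r = 0,…,τ−1 the 'sub-symbol' identities hold: ∑_j a_{2j}(2j)^r z₀^{2j} = p^r c, ∑_j a_{2j+1}(2j)^r z₀^{2j+1} = (p−1)^r c, where c = z₀^p (a fixed nonzero constant). Then for r = 0,…,τ−1: z₀^r · a^{(r)}(z₀) = 2c ∏_{i=0}^{r−1}(p−i), i.e. the r-th derivative satisfies a^{(r)}(z₀) = 2 c z₀^{−r} ∏_{i=0}^{r−1}(p−i). -/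
/-!
Write `a^{(r)}(z₀) z₀^r = ∑ⱼ aⱼ (j)_r z₀^j` with the falling factorial `(j)_r` of degree `r`, and
split the sum into even and odd indices. Since `r < τ`, each half is a linear combination of the
given moments of order `< τ`, so it evaluates `(·)_r` at the moment parameter: `(p)_r c` for the
even half, and `(p - 1 + 1)_r c = (p)_r c` for the odd half, whose nodes `2j + 1` are the
moment nodes `2j` shifted by one.
-/

open Finset Polynomial

theorem iteratedDeriv_sum_mul_zpow {𝕜 : Type*} [NontriviallyNormedField 𝕜] [CompleteSpace 𝕜]
    (s : Finset ℤ) (a : ℤ → 𝕜) (r : ℕ) {z : 𝕜} (hz : z ≠ 0) :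
    iteratedDeriv r (fun z => ∑ j ∈ s, a j * z ^ j) z
      = ∑ j ∈ s, a j * (∏ i ∈ range r, ((j : 𝕜) - i)) * z ^ (j - r) := by
  have hcd (j : ℤ) : ContDiffAt 𝕜 r (fun z => a j * z ^ j) z :=
    contDiffAt_const.mul (analyticAt_id.zpow hz).contDiffAt
  rw [iteratedDeriv_fun_sum fun j _ => hcd j]
  refine sum_congr rfl fun j _ => ?_
  rw [iteratedDeriv_const_mul_field, iteratedDeriv_eq_iterate, iter_deriv_zpow, mul_assoc]

theorem sum_Icc_eq_sum_two_mul_add_sum_two_mul_add_one {M : Type*} [AddCommMonoid M] (N : ℕ)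
    (f : ℤ → M) (hf : ∀ j, f j ≠ 0 → j ∈ Icc (-(N : ℤ)) N) :
    ∑ j ∈ Icc (-(N : ℤ)) N, f j
      = ∑ k ∈ Icc (-(N : ℤ)) N, f (2 * k) + ∑ k ∈ Icc (-(N : ℤ)) N, f (2 * k + 1) := by
  set T := Icc (-(N : ℤ)) N
  have hdisj : Disjoint (T.image (2 * ·)) (T.image (2 * · + 1)) := by
    simp only [disjoint_left, mem_image]
    omega
  rw [← sum_image (f := f) (g := (2 * ·)) (by intro _ _ _ _ h; simpa using h),
    ← sum_image (f := f) (g := (2 * · + 1)) (by intro _ _ _ _ h; simpa using h),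
    ← sum_union hdisj]
  refine sum_subset (fun j hj => ?_) fun j _ hj => not_not.1 (mt (hf j) hj)
  simp only [mem_union, mem_image, T, mem_Icc] at hj ⊢
  rcases Int.emod_two_eq_zero_or_one j with h | h
  · exact .inl ⟨j / 2, by omega, by omega⟩
  · exact .inr ⟨j / 2, by omega, by omega⟩

section Moments

variable {R ι : Type*} [CommRing R] (s : Finset ι) (b x : ι → R) (w c : R) {τ : ℕ}

theorem sum_mul_eval_eq_of_moments (hmom : ∀ m < τ, ∑ k ∈ s, b k * x k ^ m = w ^ m * c)
    {f : R[X]} (hf : f.natDegree < τ) :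
    ∑ k ∈ s, b k * f.eval (x k) = f.eval w * c := by
  simp only [eval_eq_sum_range' hf, mul_sum, sum_mul]
  rw [sum_comm]
  refine sum_congr rfl fun m hm => ?_
  rw [mul_assoc, ← hmom m (mem_range.1 hm), mul_sum]
  exact sum_congr rfl fun k _ => by ring

theorem sum_mul_descPochhammer_eval_add_of_moments [IsDomain R] (d : R)
    (hmom : ∀ m < τ, ∑ k ∈ s, b k * x k ^ m = w ^ m * c) {r : ℕ} (hr : r < τ) :
    ∑ k ∈ s, b k * (descPochhammer R r).eval (x k + d) = (descPochhammer R r).eval (w + d) * c := by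
  have hdeg : ((descPochhammer R r).comp (X + C d)).natDegree < τ := by
    rwa [natDegree_comp, natDegree_X_add_C, mul_one, descPochhammer_natDegree]
  simpa [eval_comp] using sum_mul_eval_eq_of_moments s b x w c hmom hdeg

end Moments

theorem stmt8_general (M : ℕ) (a : ℤ → ℂ)
    (hsupp : ∀ j : ℤ, a j ≠ 0 → j ∈ Finset.Icc (-(M : ℤ)) M)
    (A : ℂ → ℂ)
    (hA : A = fun z : ℂ => ∑ j ∈ Finset.Icc (-(M : ℤ)) M, a j * z ^ j)
    (z₀ : ℂ) (hz₀ : z₀ ≠ 0) (p : ℝ) (τ : ℕ)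
    (c : ℂ)
    (heven : ∀ r < τ,
      ∑ j ∈ Finset.Icc (-(M : ℤ)) M,
          a (2 * j) * ((2 * j : ℤ) : ℂ) ^ r * z₀ ^ (2 * j) = (p : ℂ) ^ r * c)
    (hodd : ∀ r < τ,
      ∑ j ∈ Finset.Icc (-(M : ℤ)) M,
          a (2 * j + 1) * ((2 * j : ℤ) : ℂ) ^ r * z₀ ^ (2 * j + 1) = ((p : ℂ) - 1) ^ r * c) :
    ∀ r < τ,
      iteratedDeriv r A z₀
        = 2 * c * z₀ ^ (-(r : ℤ)) * ∏ i ∈ Finset.range r, ((p : ℂ) - (i : ℂ)) := by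
  intro r hr
  set T := Icc (-(M : ℤ)) M
  set P := descPochhammer ℂ r with hP
  have hsum_even : ∑ k ∈ T, a (2 * k) * z₀ ^ (2 * k) * P.eval ((2 * k : ℤ) : ℂ)
      = P.eval (p : ℂ) * c := by
    simpa using sum_mul_descPochhammer_eval_add_of_moments T (fun k => a (2 * k) * z₀ ^ (2 * k))
      (fun k => ((2 * k : ℤ) : ℂ)) _ c 0
      (fun m hm => by rw [← heven m hm]; exact sum_congr rfl fun k _ => by ring) hr
  have hsum_odd : ∑ k ∈ T, a (2 * k + 1) * z₀ ^ (2 * k + 1) * P.eval ((2 * k + 1 : ℤ) : ℂ)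
      = P.eval (p : ℂ) * c := by
    have := sum_mul_descPochhammer_eval_add_of_moments T
      (fun k => a (2 * k + 1) * z₀ ^ (2 * k + 1)) (fun k => ((2 * k : ℤ) : ℂ)) _ c 1
      (fun m hm => by rw [← hodd m hm]; exact sum_congr rfl fun k _ => by ring) hr
    rw [sub_add_cancel] at this
    simpa using this
  calc iteratedDeriv r A z₀
      = ∑ j ∈ T, a j * P.eval (j : ℂ) * z₀ ^ (j - r) := by
        rw [hA, iteratedDeriv_sum_mul_zpow T a r hz₀, hP]
        simp only [descPochhammer_eval_eq_prod_range]
    _ = z₀ ^ (-(r : ℤ)) * ∑ j ∈ T, a j * z₀ ^ j * P.eval (j : ℂ) := by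
        rw [mul_sum]
        refine sum_congr rfl fun j _ => ?_
        rw [sub_eq_neg_add, zpow_add₀ hz₀]
        ring
    _ = z₀ ^ (-(r : ℤ)) * (P.eval (p : ℂ) * c + P.eval (p : ℂ) * c) := by
        rw [sum_Icc_eq_sum_two_mul_add_sum_two_mul_add_one M _
          fun j hj => hsupp j (left_ne_zero_of_mul (left_ne_zero_of_mul hj)), hsum_even, hsum_odd]
    _ = _ := by
        simp only [hP, descPochhammer_eval_eq_prod_range]
        ring

theorem stmt8 (M : ℕ) (a : ℤ → ℂ)
    (hsupp : ∀ j : ℤ, a j ≠ 0 → j ∈ Finset.Icc (-(M : ℤ)) M)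
    (A : ℂ → ℂ)
    (hA : A = fun z : ℂ => ∑ j ∈ Finset.Icc (-(M : ℤ)) M, a j * z ^ j)
    (z₀ : ℂ) (hz₀ : z₀ ≠ 0) (p : ℝ) (τ : ℕ) (hτ : 1 ≤ τ)
    (c : ℂ) (hc : c ≠ 0)
    (heven : ∀ r < τ,
      ∑ j ∈ Finset.Icc (-(M : ℤ)) M,
          a (2 * j) * ((2 * j : ℤ) : ℂ) ^ r * z₀ ^ (2 * j) = (p : ℂ) ^ r * c)
    (hodd : ∀ r < τ,
      ∑ j ∈ Finset.Icc (-(M : ℤ)) M,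
          a (2 * j + 1) * ((2 * j : ℤ) : ℂ) ^ r * z₀ ^ (2 * j + 1) = ((p : ℂ) - 1) ^ r * c) :
    ∀ r < τ,
      iteratedDeriv r A z₀
        = 2 * c * z₀ ^ (-(r : ℤ)) * ∏ i ∈ Finset.range r, ((p : ℂ) - (i : ℂ)) :=
  stmt8_general M a hsupp A hA z₀ hz₀ p τ c heven hodd
end

section
/- Let a(z) = ∑_j a_j z^j be a Laurent polynomial, z₀ ∈ ℂ∖{0}, p ∈ ℝ, τ ≥ 1, c ≠ 0. Suppose for all r = 0,…,τ−1: ∑_j a_{2j}(2j)^r z₀^{2j} = p^r c and ∑_j a_{2j+1}(2j)^r z₀^{2j+1} = (p−1)^r c. Then for r = 0,…,τ−1 the derivatives of a at −z₀ vanish: a^{(r)}(−z₀) = 0. -/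
open Finset

theorem stmt9 (M : ℕ) (a : ℤ → ℂ)
    (hsupp : ∀ j : ℤ, a j ≠ 0 → j ∈ Finset.Icc (-(M : ℤ)) M)
    (A : ℂ → ℂ)
    (hA : A = fun z : ℂ => ∑ j ∈ Finset.Icc (-(M : ℤ)) M, a j * z ^ j)
    (z₀ : ℂ) (hz₀ : z₀ ≠ 0) (p : ℝ) (τ : ℕ) (hτ : 1 ≤ τ)
    (c : ℂ) (hc : c ≠ 0)
    (heven : ∀ r < τ,
      ∑ j ∈ Finset.Icc (-(M : ℤ)) M,
          a (2 * j) * ((2 * j : ℤ) : ℂ) ^ r * z₀ ^ (2 * j) = (p : ℂ) ^ r * c)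
    (hodd : ∀ r < τ,
      ∑ j ∈ Finset.Icc (-(M : ℤ)) M,
          a (2 * j + 1) * ((2 * j : ℤ) : ℂ) ^ r * z₀ ^ (2 * j + 1) = ((p : ℂ) - 1) ^ r * c) :
    ∀ r < τ, iteratedDeriv r A (-z₀) = 0 := by
  intro r hr
  set S := Finset.Icc (-(M : ℤ)) (M : ℤ) with hS
  -- Step A: formula for iterated derivatives away from 0
  have hderiv : ∀ (n : ℕ) (z : ℂ), z ≠ 0 →
      deriv^[n] A z = ∑ j ∈ S, a j * (∏ i ∈ Finset.range n, ((j : ℂ) - (i : ℂ))) *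
        z ^ (j - (n : ℤ)) := by
    intro n
    induction n with
    | zero =>
      intro z hz
      simp [hA]
    | succ n ih =>
      intro z hz
      rw [Function.iterate_succ_apply']
      have hev : deriv^[n] A =ᶠ[nhds z]
          fun w => ∑ j ∈ S, (a j * (∏ i ∈ Finset.range n, ((j : ℂ) - (i : ℂ)))) *
            w ^ (j - (n : ℤ)) := by
        filter_upwards [isOpen_ne.mem_nhds hz] with w hw
        rw [ih w hw]
      rw [hev.deriv_eq, deriv_fun_sum (fun j _ => by
        exact (differentiableAt_zpow.mpr (Or.inl hz)).const_mul _)]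
      refine Finset.sum_congr rfl fun j _ => ?_
      rw [deriv_const_mul _ (differentiableAt_zpow.mpr (Or.inl hz)), deriv_zpow]
      rw [Finset.prod_range_succ]
      have h1 : ((j - (n : ℤ) : ℤ) : ℂ) = (j : ℂ) - (n : ℂ) := by push_cast; ring
      have h2 : j - (n : ℤ) - 1 = j - ((n : ℕ) + 1 : ℤ) := by ring
      rw [h1, h2]
      have h3 : ((n : ℕ) + 1 : ℤ) = ((n + 1 : ℕ) : ℤ) := by push_cast; ring
      rw [h3]
      ring
  -- Step B: polynomial evaluation identities
  have hevalE : ∀ P : Polynomial ℂ, P.natDegree < τ →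
      ∑ k ∈ S, a (2 * k) * P.eval ((2 * k : ℤ) : ℂ) * z₀ ^ (2 * k)
        = P.eval (p : ℂ) * c := by
    intro P hP
    calc ∑ k ∈ S, a (2 * k) * P.eval ((2 * k : ℤ) : ℂ) * z₀ ^ (2 * k)
        = ∑ k ∈ S, ∑ s ∈ Finset.range τ,
            P.coeff s * (a (2 * k) * ((2 * k : ℤ) : ℂ) ^ s * z₀ ^ (2 * k)) := by
          refine Finset.sum_congr rfl fun k _ => ?_
          rw [Polynomial.eval_eq_sum_range' hP, Finset.mul_sum, Finset.sum_mul]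
          exact Finset.sum_congr rfl fun s _ => by ring
      _ = ∑ s ∈ Finset.range τ, P.coeff s *
            ∑ k ∈ S, a (2 * k) * ((2 * k : ℤ) : ℂ) ^ s * z₀ ^ (2 * k) := by
          rw [Finset.sum_comm]
          exact Finset.sum_congr rfl fun s _ => (Finset.mul_sum _ _ _).symm
      _ = ∑ s ∈ Finset.range τ, P.coeff s * ((p : ℂ) ^ s * c) := by
          refine Finset.sum_congr rfl fun s hs => ?_
          rw [heven s (Finset.mem_range.mp hs)]
      _ = P.eval (p : ℂ) * c := by
          rw [Polynomial.eval_eq_sum_range' hP, Finset.sum_mul]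
          exact Finset.sum_congr rfl fun s _ => by ring
  have hevalO : ∀ P : Polynomial ℂ, P.natDegree < τ →
      ∑ k ∈ S, a (2 * k + 1) * P.eval ((2 * k : ℤ) : ℂ) * z₀ ^ (2 * k + 1)
        = P.eval ((p : ℂ) - 1) * c := by
    intro P hP
    calc ∑ k ∈ S, a (2 * k + 1) * P.eval ((2 * k : ℤ) : ℂ) * z₀ ^ (2 * k + 1)
        = ∑ k ∈ S, ∑ s ∈ Finset.range τ,
            P.coeff s * (a (2 * k + 1) * ((2 * k : ℤ) : ℂ) ^ s * z₀ ^ (2 * k + 1)) := by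
          refine Finset.sum_congr rfl fun k _ => ?_
          rw [Polynomial.eval_eq_sum_range' hP, Finset.mul_sum, Finset.sum_mul]
          exact Finset.sum_congr rfl fun s _ => by ring
      _ = ∑ s ∈ Finset.range τ, P.coeff s *
            ∑ k ∈ S, a (2 * k + 1) * ((2 * k : ℤ) : ℂ) ^ s * z₀ ^ (2 * k + 1) := by
          rw [Finset.sum_comm]
          exact Finset.sum_congr rfl fun s _ => (Finset.mul_sum _ _ _).symm
      _ = ∑ s ∈ Finset.range τ, P.coeff s * (((p : ℂ) - 1) ^ s * c) := by
          refine Finset.sum_congr rfl fun s hs => ?_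
          rw [hodd s (Finset.mem_range.mp hs)]
      _ = P.eval ((p : ℂ) - 1) * c := by
          rw [Polynomial.eval_eq_sum_range' hP, Finset.sum_mul]
          exact Finset.sum_congr rfl fun s _ => by ring
  -- the two polynomials
  set F : Polynomial ℂ := ∏ i ∈ Finset.range r, (Polynomial.X - Polynomial.C (i : ℂ)) with hF
  set G : Polynomial ℂ := ∏ i ∈ Finset.range r,
      (Polynomial.X - Polynomial.C ((i : ℂ) - 1)) with hG
  have hFd : F.natDegree < τ := by
    have h1 : F.natDegree ≤ ∑ i ∈ Finset.range r, 1 :=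
      le_trans (Polynomial.natDegree_prod_le _ _)
        (Finset.sum_le_sum fun i _ => le_of_eq (Polynomial.natDegree_X_sub_C _))
    simp only [Finset.sum_const, Finset.card_range, smul_eq_mul, mul_one] at h1
    exact lt_of_le_of_lt h1 hr
  have hGd : G.natDegree < τ := by
    have h1 : G.natDegree ≤ ∑ i ∈ Finset.range r, 1 :=
      le_trans (Polynomial.natDegree_prod_le _ _)
        (Finset.sum_le_sum fun i _ => le_of_eq (Polynomial.natDegree_X_sub_C _))
    simp only [Finset.sum_const, Finset.card_range, smul_eq_mul, mul_one] at h1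
    exact lt_of_le_of_lt h1 hr
  have hFev : ∀ x : ℂ, F.eval x = ∏ i ∈ Finset.range r, (x - (i : ℂ)) := by
    intro x; simp [hF, Polynomial.eval_prod]
  have hGev : ∀ x : ℂ, G.eval x = ∏ i ∈ Finset.range r, (x - ((i : ℂ) - 1)) := by
    intro x; simp [hG, Polynomial.eval_prod]
  -- the summand function
  set g : ℤ → ℂ := fun j => a j * (∏ i ∈ Finset.range r, ((j : ℂ) - (i : ℂ))) * (-z₀) ^ j
    with hg
  -- even/odd split
  have hneg : (-z₀) ≠ 0 := neg_ne_zero.mpr hz₀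
  have hsq : ∀ k : ℤ, (-z₀) ^ (2 * k) = z₀ ^ (2 * k) := by
    intro k
    rw [zpow_mul, zpow_mul]
    congr 1
    rw [show (2 : ℤ) = ((2 : ℕ) : ℤ) by norm_num, zpow_natCast, zpow_natCast]
    ring
  have hsq1 : ∀ k : ℤ, (-z₀) ^ (2 * k + 1) = -(z₀ ^ (2 * k + 1)) := by
    intro k
    rw [zpow_add₀ hneg, zpow_add₀ hz₀, hsq]
    simp only [zpow_one]
    ring
  have hsplit : ∑ j ∈ S, g j = (∑ k ∈ S, g (2 * k)) + (∑ k ∈ S, g (2 * k + 1)) := by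
    classical
    have hinjE : ∀ x ∈ S, ∀ y ∈ S, 2 * x = 2 * y → x = y := fun x _ y _ h => by omega
    have hinjO : ∀ x ∈ S, ∀ y ∈ S, 2 * x + 1 = 2 * y + 1 → x = y := fun x _ y _ h => by omega
    rw [← Finset.sum_image hinjE, ← Finset.sum_image hinjO]
    rw [← Finset.sum_union (by
      rw [Finset.disjoint_left]
      rintro x hx hx'
      simp only [Finset.mem_image] at hx hx'
      obtain ⟨k, _, rfl⟩ := hx
      obtain ⟨l, _, h⟩ := hx'
      omega)]
    apply Finset.sum_subset
    · intro j hj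
      simp only [hS, Finset.mem_Icc] at hj
      rcases Int.even_or_odd j with ⟨k, hk⟩ | ⟨k, hk⟩
      · refine Finset.mem_union_left _ (Finset.mem_image.mpr ⟨k, ?_, by omega⟩)
        simp only [hS, Finset.mem_Icc]; omega
      · refine Finset.mem_union_right _ (Finset.mem_image.mpr ⟨k, ?_, by omega⟩)
        simp only [hS, Finset.mem_Icc]; omega
    · intro j _ hj
      have : a j = 0 := by
        by_contra h
        exact hj (hsupp j h)
      simp [hg, this]
  -- compute the two half sums
  have hEsum : ∑ k ∈ S, g (2 * k) = F.eval (p : ℂ) * c := by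
    rw [← hevalE F hFd]
    refine Finset.sum_congr rfl fun k _ => ?_
    simp only [hg]
    rw [hFev, hsq]

  have hOsum : ∑ k ∈ S, g (2 * k + 1) = -(F.eval (p : ℂ) * c) := by
    have h1 : ∑ k ∈ S, a (2 * k + 1) * G.eval ((2 * k : ℤ) : ℂ) * z₀ ^ (2 * k + 1)
        = G.eval ((p : ℂ) - 1) * c := hevalO G hGd
    have h2 : G.eval ((p : ℂ) - 1) = F.eval (p : ℂ) := by
      rw [hFev, hGev]
      exact Finset.prod_congr rfl fun i _ => by ring
    rw [← h2, ← h1, ← Finset.sum_neg_distrib]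
    refine Finset.sum_congr rfl fun k _ => ?_
    simp only [hg]
    rw [hGev, hsq1]
    have h3 : ∏ i ∈ Finset.range r, (((2 * k + 1 : ℤ) : ℂ) - (i : ℂ))
        = ∏ i ∈ Finset.range r, (((2 * k : ℤ) : ℂ) - ((i : ℂ) - 1)) := by
      refine Finset.prod_congr rfl fun i _ => by push_cast; ring
    rw [h3]
    ring
  have hgsum : ∑ j ∈ S, g j = 0 := by
    rw [hsplit, hEsum, hOsum]; ring
  -- conclude
  rw [iteratedDeriv_eq_iterate, hderiv r (-z₀) hneg]
  have hmul : (∑ j ∈ S, a j * (∏ i ∈ Finset.range r, ((j : ℂ) - (i : ℂ))) *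
      (-z₀) ^ (j - (r : ℤ))) * (-z₀) ^ (r : ℤ) = ∑ j ∈ S, g j := by
    rw [Finset.sum_mul]
    refine Finset.sum_congr rfl fun j _ => ?_
    simp only [hg]
    have : (-z₀) ^ (j - (r : ℤ)) * (-z₀) ^ (r : ℤ) = (-z₀) ^ j := by
      rw [← zpow_add₀ hneg]
      congr 1
      ring
    rw [mul_assoc, this]
  have hz : (-z₀) ^ (r : ℤ) ≠ 0 := zpow_ne_zero _ hneg
  have := hmul.trans hgsum
  exact (mul_eq_zero.mp this).resolve_right hz
end
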